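/- arXiv:2509.02408 — 2 statements merged into one kernel-verified Lean document; each statement's English description precedes it below -/
import Mathlib

section
/- In the parallel coupon collector problem with N ≥ 2 coupon types and C ≥ 1 collectors, for every natural number t, P(T(N, C) ≥ t) ≥ 1 − (1 − ((N−1)/N)^t)^C. -/
open MeasureTheory ProbabilityTheory
open scoped ENNReal

/-- The cover time of the parallel coupon collector problem: the first round
`t` by which each of the `C` collectors has collected each of the `N` coupon
types (`ω s c` is the coupon type picked by collector `c` in round `s`). -/
noncomputable def coverTime {N C : ℕ} (ω : ℕ → Fin C → Fin N) : ℕ :=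
  sInf {t | ∀ c : Fin C, ∀ x : Fin N, ∃ s < t, ω s c = x}

/-- `μ` is the law of the picks in the parallel coupon collector problem with
`N` coupon types and `C` collectors: the picks of different rounds are
independent, and in each round the joint pick of the `C` collectors is uniform
among all `N ^ C` possibilities (equivalently, each collector independently
picks a coupon type uniformly at random). -/
def IsCouponMeasure {N C : ℕ} (μ : MeasureTheory.Measure (ℕ → Fin C → Fin N)) : Prop :=
  MeasureTheory.IsProbabilityMeasure μ ∧
    ProbabilityTheory.iIndepFun (fun t (ω : ℕ → Fin C → Fin N) => ω t) μ ∧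
    ∀ t : ℕ, ∀ f : Fin C → Fin N, μ {ω | ω t = f} = ((N : ENNReal) ^ C)⁻¹

/-!
A collector who has not yet drawn a fixed coupon type `x` after `t` rounds has not finished, so
`T ≥ t` unless every collector has drawn `x` within the first `t` rounds. The first `t` rounds
of picks are uniform on `Fin t → Fin C → Fin N`, and counting the configurations in which each
of the `C` columns contains `x` gives probability `(1 - ((N - 1) / N) ^ t) ^ C` for that event.
The only other way to get `T < t` is `T = sInf ∅ = 0`, i.e. some collector never completes,
which has probability zero since in each round it misses a given coupon with probability `< 1`.
-/

open Finset

section IidUniform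

variable {Ω β : Type*} [MeasurableSpace Ω] [MeasurableSpace β] [MeasurableSingletonClass β]
  {μ : Measure Ω} {X : ℕ → Ω → β} {p : ℝ≥0∞}

lemma measure_preimage_finset_eq_card_mul (hX : ∀ i, Measurable (X i))
    (hp : ∀ i b, μ (X i ⁻¹' {b}) = p) (i : ℕ) (S : Finset β) :
    μ (X i ⁻¹' S) = #S * p := by
  rw [← sum_measure_preimage_singleton S fun b _ => hX i (measurableSet_singleton b)]
  simp [hp]

lemma measure_prefix_preimage_eq_card_mul (hX : ∀ i, Measurable (X i)) (hindep : iIndepFun X μ)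
    (hp : ∀ i b, μ (X i ⁻¹' {b}) = p) (n : ℕ) (B : Finset (Fin n → β)) :
    μ ((fun ω (i : Fin n) => X i ω) ⁻¹' B) = #B * p ^ n := by
  have hprefix : Measurable fun ω (i : Fin n) => X i ω := measurable_pi_lambda _ fun i => hX i
  have hcylinder (g : Fin n → β) : μ ((fun ω (i : Fin n) => X i ω) ⁻¹' {g}) = p ^ n := by
    have hinter : (fun ω (i : Fin n) => X i ω) ⁻¹' {g} =
        ⋂ i ∈ (univ : Finset (Fin n)), X i ⁻¹' {g i} := by
      ext ω; simp [funext_iff]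
    rw [hinter, (hindep.precomp Fin.val_injective).measure_inter_preimage_eq_mul univ
      fun i _ => measurableSet_singleton (g i)]
    simp [hp]
  rw [← sum_measure_preimage_singleton B fun g _ => hprefix (measurableSet_singleton g)]
  simp [hcylinder]

lemma measure_forall_mem_eq_zero [Fintype β] [IsProbabilityMeasure μ]
    (hX : ∀ i, Measurable (X i)) (hindep : iIndepFun X μ) (hp : ∀ i b, μ (X i ⁻¹' {b}) = p)
    {S : Finset β} (hS : S ≠ univ) :
    μ {ω | ∀ i, X i ω ∈ S} = 0 := by
  obtain ⟨b, -, hb⟩ := exists_of_ssubset (ssubset_univ_iff.2 hS)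
  have hcard : (Fintype.card β : ℝ≥0∞) * p = 1 := by
    simpa using (measure_preimage_finset_eq_card_mul hX hp 0 univ).symm
  have hp0 : p ≠ 0 := by rintro rfl; simp at hcard
  have hptop : p ≠ ∞ := (hp 0 b ▸ prob_le_one).trans_lt ENNReal.one_lt_top |>.ne
  have hlt : (#S : ℝ≥0∞) * p < 1 := by
    rw [← hcard, ENNReal.mul_lt_mul_iff_left hp0 hptop]
    exact_mod_cast card_lt_univ_of_notMem hb
  have hbound (n : ℕ) : μ {ω | ∀ i, X i ω ∈ S} ≤ (#S * p) ^ n := by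
    calc μ {ω | ∀ i, X i ω ∈ S}
        ≤ μ ((fun ω (i : Fin n) => X i ω) ⁻¹' ↑(Fintype.piFinset fun _ : Fin n => S)) :=
          measure_mono fun ω hω => by simpa using fun i : Fin n => hω i
      _ = (#S * p) ^ n := by
          rw [measure_prefix_preimage_eq_card_mul hX hindep hp, Fintype.card_piFinset_const,
            mul_pow]
          norm_cast
  exact le_antisymm
    (ge_of_tendsto' (ENNReal.tendsto_pow_atTop_nhds_zero_of_lt_one hlt) hbound) zero_le

end IidUniform

lemma card_filter_exists_eq {α β : Type*} [Fintype α] [DecidableEq α] [Fintype β]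
    [DecidableEq β] (b : β) [DecidablePred fun h : α → β => ∃ a, h a = b] :
    #{h : α → β | ∃ a, h a = b} =
      Fintype.card β ^ Fintype.card α - (Fintype.card β - 1) ^ Fintype.card α := by
  have hmiss : #{h : α → β | ∀ a, h a ≠ b} = (Fintype.card β - 1) ^ Fintype.card α := by
    have hpi : ({h : α → β | ∀ a, h a ≠ b} : Finset _) =
        Fintype.piFinset fun _ => univ.erase b := by
      ext; simp
    rw [hpi, Fintype.card_piFinset, prod_const, card_erase_of_mem (mem_univ b), card_univ,
      card_univ]
  have hsplit := card_filter_add_card_filter_not (s := univ) fun h : α → β => ∀ a, h a ≠ b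
  simp only [not_forall, not_not, card_univ, Fintype.card_fun] at hsplit
  omega

lemma card_filter_forall_exists_eq {α β γ : Type*} [Fintype α] [DecidableEq α] [Fintype β]
    [DecidableEq β] [Fintype γ] [DecidableEq γ] (b : β)
    [DecidablePred fun g : α → γ → β => ∀ c, ∃ a, g a c = b] :
    #{g : α → γ → β | ∀ c, ∃ a, g a c = b} =
      (Fintype.card β ^ Fintype.card α - (Fintype.card β - 1) ^ Fintype.card α) ^
        Fintype.card γ := by
  rw [← card_filter_exists_eq, ← Fintype.card_subtype, ← Fintype.card_subtype,
    ← Fintype.card_fun]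
  exact Fintype.card_congr <|
    ((Equiv.piComm fun (_ : α) (_ : γ) => β).subtypeEquiv fun _ => Iff.rfl).trans
      (Equiv.subtypePiEquivPi (p := fun (_ : γ) (h : α → β) => ∃ a, h a = b))

lemma Finite.exists_forall_exists_lt {ι : Type*} [Finite ι] {P : ι → ℕ → Prop}
    (h : ∀ i, ∃ s, P i s) : ∃ u, ∀ i, ∃ s < u, P i s := by
  choose f hf using h
  obtain ⟨M, hM⟩ := Finite.exists_le f
  exact ⟨M + 1, fun i => ⟨f i, Nat.lt_succ_of_le (hM i), hf i⟩⟩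

lemma le_coverTime {N C t : ℕ} {ω : ℕ → Fin C → Fin N}
    (hω : ∃ u, ∀ c x, ∃ s < u, ω s c = x) {x : Fin N}
    (hx : ¬ ∀ c, ∃ s < t, ω s c = x) : t ≤ coverTime ω := by
  by_contra! h
  exact hx fun c => (Nat.sInf_mem hω c x).imp fun s hs => ⟨hs.1.trans h, hs.2⟩

namespace IsCouponMeasure

variable {N C : ℕ} {μ : Measure (ℕ → Fin C → Fin N)}

lemma ae_all_collected_eventually (hμ : IsCouponMeasure μ) :
    ∀ᵐ ω ∂μ, ∃ u, ∀ c x, ∃ s < u, ω s c = x := by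
  have := hμ.1
  have hhit (c : Fin C) (x : Fin N) : ∀ᵐ ω ∂μ, ∃ s, ω s c = x := by
    have hS : ({f | f c ≠ x} : Finset (Fin C → Fin N)) ≠ univ := fun h => by
      have hconst := mem_univ fun _ : Fin C => x
      rw [← h, mem_filter] at hconst
      exact hconst.2 rfl
    rw [ae_iff]
    simpa using measure_forall_mem_eq_zero (X := fun s (ω : ℕ → Fin C → Fin N) => ω s)
      (fun s => measurable_pi_apply s) hμ.2.1 hμ.2.2 hS
  filter_upwards [ae_all_iff.2 fun c => ae_all_iff.2 (hhit c)] with ω hω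
  obtain ⟨u, hu⟩ := Finite.exists_forall_exists_lt (P := fun i s => ω s i.1 = i.2)
    fun i : Fin C × Fin N => hω i.1 i.2
  exact ⟨u, fun c x => hu (c, x)⟩

lemma measureReal_forall_collected_by (hμ : IsCouponMeasure μ) (x : Fin N) (t : ℕ) :
    μ.real {ω | ∀ c, ∃ s < t, ω s c = x} = (1 - (((N : ℝ) - 1) / N) ^ t) ^ C := by
  have hset : {ω : ℕ → Fin C → Fin N | ∀ c, ∃ s < t, ω s c = x} =
      (fun ω (s : Fin t) => ω s) ⁻¹'
        (({g | ∀ c, ∃ s, g s c = x} : Finset (Fin t → Fin C → Fin N)) : Set _) := by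
    ext; simp [Fin.exists_iff]
  have hN : 1 ≤ N := x.pos
  have hpow : (N - 1) ^ t ≤ N ^ t := Nat.pow_le_pow_left (Nat.sub_le N 1) t
  have hN0 : (N : ℝ) ≠ 0 := by positivity
  rw [measureReal_def, hset,
    measure_prefix_preimage_eq_card_mul (fun s => measurable_pi_apply s) hμ.2.1 hμ.2.2,
    card_filter_forall_exists_eq]
  simp only [Fintype.card_fin, ENNReal.toReal_mul, ENNReal.toReal_pow, ENNReal.toReal_inv,
    ENNReal.toReal_natCast]
  push_cast [Nat.cast_sub hpow, Nat.cast_sub hN]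
  rw [div_pow, one_sub_div (pow_ne_zero t hN0), div_pow, div_eq_mul_inv, inv_pow, ← pow_mul,
    ← pow_mul, mul_comm t C]

end IsCouponMeasure

theorem coupon_tail_lower_bound_general
    (N C : ℕ) (hN : 2 ≤ N)
    (μ : Measure (ℕ → Fin C → Fin N)) (hμ : IsCouponMeasure μ) (t : ℕ) :
    ENNReal.ofReal (1 - (1 - (((N : ℝ) - 1) / N) ^ t) ^ C) ≤
      μ {ω | t ≤ coverTime ω} := by
  have := hμ.1
  let x : Fin N := ⟨0, by omega⟩
  let D := {ω : ℕ → Fin C → Fin N | ∀ c, ∃ s < t, ω s c = x}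
  have hD : MeasurableSet D := by measurability
  have hDc : Dᶜ ≤ᵐ[μ] {ω | t ≤ coverTime ω} := by
    filter_upwards [hμ.ae_all_collected_eventually] with ω hω hnot using le_coverTime hω hnot
  calc ENNReal.ofReal (1 - (1 - (((N : ℝ) - 1) / N) ^ t) ^ C) = μ Dᶜ := by
        rw [← hμ.measureReal_forall_collected_by x t, ← probReal_compl_eq_one_sub hD,
          ofReal_measureReal]
    _ ≤ μ {ω | t ≤ coverTime ω} := measure_mono_ae hDc

/-- In the parallel coupon collector problem with `N ≥ 2`
coupon types and `C ≥ 1` collectors, for every natural number `t`,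
`P(T(N, C) ≥ t) ≥ 1 - (1 - ((N-1)/N)^t)^C`. -/
theorem coupon_tail_lower_bound
    (N C : ℕ) (hN : 2 ≤ N) (hC : 1 ≤ C)
    (μ : Measure (ℕ → Fin C → Fin N)) (hμ : IsCouponMeasure μ) (t : ℕ) :
    ENNReal.ofReal (1 - (1 - (((N : ℝ) - 1) / N) ^ t) ^ C) ≤
      μ {ω | t ≤ coverTime ω} :=
  coupon_tail_lower_bound_general N C hN μ hμ t
end

section
/- For any ℓ ≥ 1 and cache size k such that ℓ divides k + 1, the competitive ratio of LRU for the ℓ-layered paging problem equals exactly k: LRU is k-competitive (since every layered request sequence is in particular a valid paging request sequence and LRU is k-competitive for standard paging), and no ratio smaller than k is achievable by LRU on layered sequences. -/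
open MeasureTheory ProbabilityTheory
open scoped ENNReal

/-- A valid evolution of cache states for a paging algorithm with cache size `k`
serving the request sequence `σ`: `caches i` is the cache content just before
serving request number `i` (the cache is initially empty, a page may only enter
the cache when it is requested, the requested page must be in the cache
afterwards, and the cache never holds more than `k` pages). -/
def IsExec {P : Type*} [DecidableEq P] (k : ℕ) (σ : ℕ → P) (caches : ℕ → Finset P) : Prop :=
  caches 0 = ∅ ∧
    ∀ i, σ i ∈ caches (i + 1) ∧ caches (i + 1) ⊆ insert (σ i) (caches i) ∧
      (caches (i + 1)).card ≤ k

/-- The number of cache misses incurred on the first `m` requests of `σ` by an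
algorithm whose cache states are `caches`. -/
def missCount {P : Type*} [DecidableEq P] (σ : ℕ → P) (caches : ℕ → Finset P)
    (m : ℕ) : ℕ :=
  ((Finset.range m).filter fun i => σ i ∉ caches i).card

/-- The optimal (offline) number of cache misses on the first `m` requests of
`σ`, with cache size `k`. -/
noncomputable def OPT {P : Type*} [DecidableEq P] (k : ℕ) (σ : ℕ → P) (m : ℕ) : ℕ :=
  sInf {c | ∃ caches : ℕ → Finset P, IsExec k σ caches ∧ missCount σ caches m = c}

/-- A deterministic online paging algorithm with cache size `k`: it chooses its
cache content as a function of the history of requests served so far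
(the cache is initially empty, a page may only enter the cache when it is
requested, the requested page must be in the cache afterwards, and the cache
never holds more than `k` pages). -/
structure OnlineAlgo (P : Type*) [DecidableEq P] (k : ℕ) where
  cache : List P → Finset P
  cache_nil : cache [] = ∅
  mem_cache : ∀ h p, p ∈ cache (h ++ [p])
  cache_subset : ∀ h p, cache (h ++ [p]) ⊆ insert p (cache h)
  card_cache_le : ∀ h, (cache h).card ≤ k

/-- The cache of online algorithm `A` just before serving request `i` of `σ`. -/
def OnlineAlgo.caches {P : Type*} [DecidableEq P] {k : ℕ} (A : OnlineAlgo P k) (σ : ℕ → P)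
    (i : ℕ) : Finset P :=
  A.cache ((List.range i).map σ)

/-- The cost (number of cache misses) of online algorithm `A` on the first `m`
requests of `σ`. -/
def OnlineAlgo.cost {P : Type*} [DecidableEq P] {k : ℕ} (A : OnlineAlgo P k)
    (σ : ℕ → P) (m : ℕ) : ℕ :=
  missCount σ (A.caches σ) m

/-- In the `ℓ`-layered paging problem with `n` experts per layer, pages are
pairs (layer, expert index) with layer in `[0, ℓ)` and expert index in `[0, n)`;
a request sequence is layered if its `i`-th request is a page of layer `i % ℓ`.
A round is a block of `ℓ` consecutive requests starting at a multiple of `ℓ`. -/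
def IsLayered (n ℓ : ℕ) (σ : ℕ → ℕ × ℕ) : Prop :=
  ∀ i, (σ i).1 = i % ℓ ∧ (σ i).2 < n

/-- The cache of the LRU (least recently used) algorithm just before serving
request `i` of `σ`: it consists of the (at most `k`) most recently requested
distinct pages, which is exactly the cache content obtained by evicting, on
each miss with a full cache, the page whose most recent request is earliest. -/
def lruCaches {P : Type*} [DecidableEq P] (k : ℕ) (σ : ℕ → P) (i : ℕ) : Finset P :=
  ((((List.range i).map σ).dedup).reverse.take k).toFinset

/-- The number of cache misses of LRU on the first `m` requests of `σ`. -/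
def lruCost {P : Type*} [DecidableEq P] (k : ℕ) (σ : ℕ → P) (m : ℕ) : ℕ :=
  missCount σ (lruCaches k σ) m

/-!
LRU's cache consists of the `k` most recently requested distinct pages. So if LRU misses a page
it requested before, at least `k` other distinct pages were requested in between; hence any
`k + 1` LRU misses span a window of requests to at least `k + 1` distinct pages, and any cache
of size `k` must miss inside that window after its first request. Cutting LRU's misses into
groups of `k` gives `LRU ≤ k · OPT + k` on every request sequence.

Conversely, as `ℓ ∣ k + 1`, the `k + 1` pages `(r % ℓ, r / ℓ)`, `r ≤ k`, requested cyclically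
form a layered sequence. LRU misses every request of it, while an offline cache misses only
once per block of `k` requests after the first `k + 1`, so `OPT ≤ m / k + k + 1`.
-/

open Finset

namespace List

variable {α : Type*} [DecidableEq α]

-- `l.dedup.reverse` lists the distinct entries of `l` by decreasing time of last occurrence.
theorem mem_take_reverse_dedup_append_cons {A B : List α} {p : α} (hp : p ∉ B) (k : ℕ) :
    p ∈ ((A ++ p :: B).dedup.reverse.take k) ↔ B.toFinset.card < k := by
  obtain ⟨f, hf⟩ := suffix_union_right A (p :: B.dedup)
  have hpB : p ∉ take k B.dedup.reverse := fun h => hp (by simpa using mem_of_mem_take h)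
  rw [dedup_append, dedup_cons_of_notMem hp, ← hf, reverse_append, reverse_cons,
    append_assoc, singleton_append, take_append, mem_append, length_reverse, card_toFinset]
  simp only [hpB, false_or]
  cases hd : k - B.dedup.length with
  | zero => simp; omega
  | succ d => simp; omega

theorem range_eq_range_append_cons {j i : ℕ} (hji : j < i) :
    range i = range j ++ j :: range' (j + 1) (i - j - 1) := by
  rw [range_eq_range', range_eq_range', ← range'_succ]
  simpa [Nat.add_sub_cancel' hji.le, show i - j - 1 + 1 = i - j by omega] using
    (range'_append (s := 0) (m := j) (n := i - j - 1 + 1) (step := 1)).symm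

end List

section LRU

variable {P : Type*} [DecidableEq P] {k : ℕ} {σ : ℕ → P}

theorem exists_last_occurrence {j₀ i : ℕ} (h : j₀ < i) :
    ∃ j, j₀ ≤ j ∧ j < i ∧ σ j = σ j₀ ∧ ∀ u ∈ Ioo j i, σ u ≠ σ j := by
  obtain ⟨j, hj, hmax⟩ := ((Ico j₀ i).filter (σ · = σ j₀)).exists_max_image id
    ⟨j₀, by simp [h]⟩
  simp only [mem_filter, mem_Ico, id] at hj hmax
  refine ⟨j, hj.1.1, hj.1.2, hj.2, fun u hu hσu => ?_⟩
  rw [mem_Ioo] at hu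
  have := hmax u ⟨⟨by omega, hu.2⟩, hσu.trans hj.2⟩
  omega

theorem mem_lruCaches_iff_of_last {j i : ℕ} (hji : j < i) (hlast : ∀ u ∈ Ioo j i, σ u ≠ σ j) :
    σ j ∈ lruCaches k σ i ↔ #((Ioo j i).image σ) < k := by
  set B := (List.range' (j + 1) (i - j - 1)).map σ
  have hB : B.toFinset = (Ioo j i).image σ := by
    ext p
    simp only [B, List.mem_toFinset, List.mem_map, List.mem_range'_1, mem_image, mem_Ioo]
    constructor
    · rintro ⟨u, hu, rfl⟩; exact ⟨u, by omega, rfl⟩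
    · rintro ⟨u, hu, rfl⟩; exact ⟨u, by omega, rfl⟩
  have hp : σ j ∉ B := by
    rw [← List.mem_toFinset, hB, mem_image]
    rintro ⟨u, hu, hσu⟩
    exact hlast u hu hσu
  rw [lruCaches, List.mem_toFinset, List.range_eq_range_append_cons hji, List.map_append,
    List.map_cons, List.mem_take_reverse_dedup_append_cons hp, hB]

theorem mem_lruCaches_iff {p : P} {i : ℕ} :
    p ∈ lruCaches k σ i ↔ ∃ j < i, σ j = p ∧ #((Ioo j i).image σ) < k := by
  constructor
  · intro hp
    have := List.mem_of_mem_take (List.mem_toFinset.mp hp)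
    obtain ⟨j₀, hj₀, rfl⟩ := List.mem_map.mp (List.mem_dedup.mp (List.mem_reverse.mp this))
    obtain ⟨j, -, hji, hσj, hlast⟩ := exists_last_occurrence (σ := σ) (List.mem_range.mp hj₀)
    rw [← hσj] at hp ⊢
    exact ⟨j, hji, rfl, (mem_lruCaches_iff_of_last hji hlast).mp hp⟩
  · rintro ⟨j₀, hj₀, rfl, hcard⟩
    obtain ⟨j, hj, hji, hσj, hlast⟩ := exists_last_occurrence (σ := σ) hj₀
    rw [← hσj, mem_lruCaches_iff_of_last hji hlast]
    exact (card_le_card (image_subset_image (Ioo_subset_Ioo_left hj))).trans_lt hcard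

theorem lt_card_image_Icc_of_not_mem_lruCaches {j i : ℕ} (hji : j < i) (hσ : σ j = σ i)
    (hmiss : σ i ∉ lruCaches k σ i) : k < #((Icc j i).image σ) := by
  obtain ⟨j', hj', hj'i, hσj', hlast⟩ := exists_last_occurrence (σ := σ) hji
  rw [← hσ, ← hσj', mem_lruCaches_iff_of_last hj'i hlast, not_lt] at hmiss
  have hnew : σ j' ∉ (Ioo j' i).image σ := by
    rw [mem_image]; rintro ⟨u, hu, hσu⟩; exact hlast u hu hσu
  have hsub : insert (σ j') ((Ioo j' i).image σ) ⊆ (Icc j i).image σ := by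
    refine insert_subset (mem_image_of_mem σ (mem_Icc.mpr ⟨hj', hj'i.le⟩)) ?_
    exact image_subset_image fun u hu => by simp only [mem_Ioo, mem_Icc] at hu ⊢; omega
  have := card_le_card hsub
  rw [card_insert_of_notMem hnew] at this
  omega

theorem lt_card_image_Icc_of_lruMisses {G : Finset ℕ} {a b : ℕ} (hG : G ⊆ Icc a b)
    (hmiss : ∀ u ∈ G, σ u ∉ lruCaches k σ u) (hkG : k < #G) : k < #((Icc a b).image σ) := by
  by_cases hinj : Set.InjOn σ G
  · calc k < #G := hkG
      _ = #(G.image σ) := (card_image_of_injOn hinj).symm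
      _ ≤ #((Icc a b).image σ) := card_le_card (image_subset_image hG)
  · have key : ∀ u ∈ G, ∀ v ∈ G, u < v → σ u = σ v → k < #((Icc a b).image σ) := by
      intro u hu v hv huv hσ
      refine (lt_card_image_Icc_of_not_mem_lruCaches huv hσ (hmiss v hv)).trans_le ?_
      exact card_le_card (image_subset_image (Icc_subset_Icc (mem_Icc.mp (hG hu)).1
        (mem_Icc.mp (hG hv)).2))
    simp only [Set.InjOn, mem_coe, not_forall] at hinj
    obtain ⟨u, hu, v, hv, hσ, huv⟩ := hinj
    rcases Nat.lt_or_gt_of_ne huv with h | h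
    · exact key u hu v hv h hσ
    · exact key v hv u hu h hσ.symm

end LRU

section Offline

variable {P : Type*} [DecidableEq P] {k : ℕ} {σ : ℕ → P} {C : ℕ → Finset P}

theorem IsExec.exists_miss_of_lt_card_image (hC : IsExec k σ C) {a b : ℕ}
    (h : k < #((Icc a b).image σ)) : ∃ v, a < v ∧ v ≤ b ∧ σ v ∉ C v := by
  by_contra! hhit
  have hstable : ∀ u, a + 1 ≤ u → u ≤ b + 1 → C u ⊆ C (a + 1) := by
    intro u hu
    induction u, hu using Nat.le_induction with
    | base => exact fun _ => subset_rfl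
    | succ u hu ih =>
      intro hub
      calc C (u + 1) ⊆ insert (σ u) (C u) := (hC.2 u).2.1
        _ = C u := insert_eq_of_mem (hhit u (by omega) (by omega))
        _ ⊆ C (a + 1) := ih (by omega)
  have hsub : (Icc a b).image σ ⊆ C (a + 1) := by
    simp only [image_subset_iff, mem_Icc]
    rintro u ⟨hau, hub⟩
    obtain rfl | hau := hau.eq_or_lt
    · exact (hC.2 _).1
    · exact hstable u hau (by omega) (hhit u hau hub)
  exact absurd ((card_le_card hsub).trans (hC.2 a).2.2) h.not_ge

theorem OPT_le_missCount (hC : IsExec k σ C) (m : ℕ) : OPT k σ m ≤ missCount σ C m :=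
  Nat.sInf_le ⟨C, hC, rfl⟩

theorem exists_isExec_missCount_eq_OPT (hk : 1 ≤ k) (σ : ℕ → P) (m : ℕ) :
    ∃ C, IsExec k σ C ∧ missCount σ C m = OPT k σ m := by
  have hexec : IsExec k σ fun i => if i = 0 then ∅ else {σ (i - 1)} :=
    ⟨rfl, fun i => ⟨by simp, by simp, by simpa using hk⟩⟩
  exact Nat.sInf_mem (s := {c | ∃ C, IsExec k σ C ∧ missCount σ C m = c}) ⟨_, _, hexec, rfl⟩

end Offline

theorem card_le_mul_card_add {k : ℕ} {D M : Finset ℕ}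
    (h : ∀ G ⊆ D, k < #G → ∃ v ∈ M, ∃ a ∈ G, ∃ b ∈ G, a < v ∧ v ≤ b) : #D ≤ k * #M + k := by
  induction M using Finset.induction_on_max generalizing D with
  | empty =>
    by_contra! hD
    obtain ⟨v, hv, -⟩ := h D subset_rfl (by simpa using hD)
    simp at hv
  | insert w M hw ih =>
    -- `w` is the largest element of `insert w M`, so no `k + 1` elements of `D` at or above `w`
    -- can straddle one of its elements; the elements of `D` below `w` are handled by induction.
    have hlow : #(D.filter (· < w)) ≤ k * #M + k := by
      refine ih fun G hG hkG => ?_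
      obtain ⟨v, hv, a, ha, b, hb, hav, hvb⟩ := h G (hG.trans (filter_subset _ _)) hkG
      have hbw := (mem_filter.mp (hG hb)).2
      exact ⟨v, (mem_insert.mp hv).resolve_left (by omega), a, ha, b, hb, hav, hvb⟩
    have hhigh : #(D.filter (¬ · < w)) ≤ k := by
      by_contra! hkG
      obtain ⟨v, hv, a, ha, -, -, hav, -⟩ := h _ (filter_subset _ _) hkG
      have haw := (mem_filter.mp ha).2
      rcases mem_insert.mp hv with rfl | hv
      · omega
      · exact absurd (hw v hv) (by omega)
    rw [← card_filter_add_card_filter_not (· < w),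
      card_insert_of_notMem fun hwM => (hw w hwM).false]
    linarith

section Online

variable {P : Type*} [DecidableEq P] {k : ℕ}

theorem lruCost_le_mul_missCount_add {σ : ℕ → P} {C : ℕ → Finset P} (hC : IsExec k σ C)
    (m : ℕ) : lruCost k σ m ≤ k * missCount σ C m + k := by
  unfold lruCost missCount
  refine card_le_mul_card_add fun G hG hkG => ?_
  have hne : G.Nonempty := card_pos.mp (by omega)
  have hGIcc : G ⊆ Icc (G.min' hne) (G.max' hne) := fun u hu =>
    mem_Icc.mpr ⟨G.min'_le u hu, G.le_max' u hu⟩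
  have hmiss : ∀ u ∈ G, σ u ∉ lruCaches k σ u := fun u hu => (mem_filter.mp (hG hu)).2
  obtain ⟨v, hav, hvb, hv⟩ :=
    hC.exists_miss_of_lt_card_image (lt_card_image_Icc_of_lruMisses hGIcc hmiss hkG)
  have hbm := mem_range.mp (mem_filter.mp (hG (G.max'_mem hne))).1
  exact ⟨v, mem_filter.mpr ⟨mem_range.mpr (by omega), hv⟩, _, G.min'_mem hne, _,
    G.max'_mem hne, hav, hvb⟩

theorem lruCost_le_mul_OPT_add (hk : 1 ≤ k) (σ : ℕ → P) (m : ℕ) :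
    lruCost k σ m ≤ k * OPT k σ m + k := by
  obtain ⟨C, hC, hCm⟩ := exists_isExec_missCount_eq_OPT hk σ m
  exact hCm ▸ lruCost_le_mul_missCount_add hC m

end Online

def blockEnd (k i : ℕ) : ℕ := i / k * k + (k - 1)

theorem blockEnd_bounds {k : ℕ} (hk : 1 ≤ k) (i : ℕ) : i ≤ blockEnd k i ∧ blockEnd k i < i + k := by
  have := Nat.div_add_mod' i k
  have := Nat.mod_lt i hk
  unfold blockEnd
  omega

theorem blockEnd_succ {k i : ℕ} (hk : 1 ≤ k) (h : blockEnd k i ≠ i) :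
    blockEnd k (i + 1) = blockEnd k i := by
  have := blockEnd_bounds hk i
  unfold blockEnd at *
  have hlo := Nat.div_mul_le_self i k
  rw [Nat.div_eq_of_lt_le (k := i / k) (by omega) (by rw [add_mul, one_mul]; omega)]

theorem dvd_succ_of_blockEnd_eq {k i : ℕ} (hk : 1 ≤ k) (h : blockEnd k i = i) : k ∣ i + 1 := by
  unfold blockEnd at h
  exact ⟨i / k + 1, by rw [mul_add, mul_one, mul_comm]; omega⟩

theorem le_of_forall_natCast_mul_le {a b c : ℝ} (h : ∀ N : ℕ, a * N ≤ b * N + c) : a ≤ b := by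
  by_contra! hba
  obtain ⟨N, hN⟩ := exists_nat_gt (c / (a - b))
  rw [div_lt_iff₀ (sub_pos.mpr hba)] at hN
  linarith [h N]

def IsRoundRobin {P : Type*} (N : ℕ) (σ : ℕ → P) : Prop :=
  ∀ u v, σ u = σ v ↔ u ≡ v [MOD N]

-- The page kept out is the one requested at the end of the current block of `k` requests; on a
-- round-robin sequence of `k + 1` pages this is Belady's furthest-in-future rule.
def cyclicOptCaches {P : Type*} [DecidableEq P] (k : ℕ) (σ : ℕ → P) (i : ℕ) : Finset P :=
  ((range i).image σ).erase (σ (blockEnd k i))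

namespace IsRoundRobin

variable {P : Type*} {N k : ℕ} {σ : ℕ → P}

theorem apply_ne (hσ : IsRoundRobin N σ) {u v : ℕ} (huv : u < v) (hvu : v < u + N) :
    σ u ≠ σ v := by
  rw [Ne, hσ, Nat.modEq_iff_dvd' huv.le]
  intro h
  have := Nat.le_of_dvd (by omega) h
  omega

theorem apply_add (hσ : IsRoundRobin N σ) (u : ℕ) : σ (u + N) = σ u :=
  (hσ _ _).mpr (Nat.add_mod_right u N)

theorem card_image_range_le (hσ : IsRoundRobin N σ) (hN : 0 < N) [DecidableEq P] (i : ℕ) :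
    #((range i).image σ) ≤ N := by
  calc #((range i).image σ) ≤ #((range N).image σ) := by
        refine card_le_card fun x hx => ?_
        obtain ⟨u, -, rfl⟩ := mem_image.mp hx
        exact mem_image.mpr
          ⟨u % N, mem_range.mpr (Nat.mod_lt u hN), (hσ _ _).mpr (Nat.mod_modEq u N)⟩
    _ ≤ N := card_image_le.trans (card_range _).le

variable [DecidableEq P]

theorem not_mem_lruCaches (hσ : IsRoundRobin (k + 1) σ) (i : ℕ) :
    σ i ∉ lruCaches k σ i := by
  rw [mem_lruCaches_iff]
  rintro ⟨j, hji, hσj, hcard⟩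
  have hj : j + k < i := by
    by_contra
    exact hσ.apply_ne hji (by omega) hσj
  have hinj : Set.InjOn σ (Ico (i - k) i) := by
    intro u hu v hv huv
    simp only [coe_Ico, Set.mem_Ico] at hu hv
    by_contra hne
    rcases Nat.lt_or_gt_of_ne hne with h | h
    · exact hσ.apply_ne h (by omega) huv
    · exact hσ.apply_ne h (by omega) huv.symm
  have : #((Ico (i - k) i).image σ) ≤ #((Ioo j i).image σ) :=
    card_le_card (image_subset_image fun u hu => by simp only [mem_Ico, mem_Ioo] at hu ⊢; omega)
  rw [card_image_of_injOn hinj, Nat.card_Ico] at this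
  omega

theorem lruCost_eq (hσ : IsRoundRobin (k + 1) σ) (m : ℕ) :
    lruCost k σ m = m := by
  rw [lruCost, missCount, filter_true_of_mem fun i _ => hσ.not_mem_lruCaches i,
    card_range]

theorem isExec_cyclicOptCaches (hσ : IsRoundRobin (k + 1) σ) (hk : 1 ≤ k) :
    IsExec k σ (cyclicOptCaches k σ) := by
  refine ⟨by simp [cyclicOptCaches], fun i => ⟨?_, ?_, ?_⟩⟩
  · have := blockEnd_bounds hk (i + 1)
    exact mem_erase.mpr ⟨hσ.apply_ne (by omega) (by omega),
      mem_image_of_mem σ (self_mem_range_succ i)⟩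
  · intro x hx
    obtain ⟨hxe, u, hu, rfl⟩ := by simpa only [cyclicOptCaches, mem_erase, mem_image] using hx
    rcases (Nat.lt_succ_iff.mp (mem_range.mp hu)).eq_or_lt with rfl | hui
    · exact mem_insert_self _ _
    have hu : σ u ∈ (range i).image σ := mem_image_of_mem σ (mem_range.mpr hui)
    by_cases hend : blockEnd k i = i
    · by_cases hσu : σ u = σ i
      · exact hσu ▸ mem_insert_self _ _
      · exact mem_insert_of_mem (mem_erase.mpr ⟨by rwa [hend], hu⟩)
    · rw [blockEnd_succ hk hend] at hxe
      exact mem_insert_of_mem (mem_erase.mpr ⟨hxe, hu⟩)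
  · rcases Nat.lt_or_ge i k with hik | hki
    · calc #(cyclicOptCaches k σ (i + 1)) ≤ #((range (i + 1)).image σ) := card_erase_le
        _ ≤ k := card_image_le.trans (by simpa using hik)
    · have := blockEnd_bounds hk (i + 1)
      have hmem : σ (blockEnd k (i + 1)) ∈ (range (i + 1)).image σ := by
        refine mem_image.mpr ⟨blockEnd k (i + 1) - (k + 1), mem_range.mpr (by omega), ?_⟩
        rw [← hσ.apply_add, Nat.sub_add_cancel (by omega)]
      rw [cyclicOptCaches, card_erase_of_mem hmem]
      have := hσ.card_image_range_le k.succ_pos (i + 1)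
      omega

theorem missCount_cyclicOptCaches_le (hσ : IsRoundRobin (k + 1) σ) (hk : 1 ≤ k) (m : ℕ) :
    missCount σ (cyclicOptCaches k σ) m ≤ m / k + (k + 1) := by
  have hsub : (range m).filter (fun i => σ i ∉ cyclicOptCaches k σ i) ⊆
      (range m).filter (fun i => k ∣ i + 1) ∪ range (k + 1) := by
    intro i hi
    obtain ⟨him, hmiss⟩ := mem_filter.mp hi
    rw [cyclicOptCaches, mem_erase, not_and_or, not_not] at hmiss
    rcases hmiss with hhole | hfresh
    · have := blockEnd_bounds hk i
      by_cases hend : blockEnd k i = i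
      · exact mem_union_left _ (mem_filter.mpr ⟨him, dvd_succ_of_blockEnd_eq hk hend⟩)
      · exact absurd hhole (hσ.apply_ne (by omega) (by omega))
    · refine mem_union_right _ (mem_range.mpr (Nat.lt_of_not_ge fun hki => ?_))
      refine hfresh (mem_image.mpr ⟨i - (k + 1), mem_range.mpr (by omega), ?_⟩)
      rw [← hσ.apply_add, Nat.sub_add_cancel hki]
  calc missCount σ (cyclicOptCaches k σ) m
      ≤ #((range m).filter (fun i => k ∣ i + 1)) + #(range (k + 1)) :=
        (card_le_card hsub).trans (card_union_le _ _)
    _ = m / k + (k + 1) := by rw [Nat.card_multiples, card_range]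

theorem OPT_le (hσ : IsRoundRobin (k + 1) σ) (hk : 1 ≤ k) (m : ℕ) :
    OPT k σ m ≤ m / k + (k + 1) :=
  (OPT_le_missCount (hσ.isExec_cyclicOptCaches hk) m).trans
    (hσ.missCount_cyclicOptCaches_le hk m)

theorem le_of_lruCost_le_mul_OPT_add (hσ : IsRoundRobin (k + 1) σ) (hk : 1 ≤ k) {r c : ℝ}
    (h : ∀ m, (lruCost k σ m : ℝ) ≤ r * OPT k σ m + c) : (k : ℝ) ≤ r := by
  have hq : ∀ q : ℕ, (k : ℝ) * q ≤ max r 0 * q + (max r 0 * (k + 1) + c) := by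
    intro q
    have hopt : (OPT k σ (k * q) : ℝ) ≤ q + (k + 1) := by
      have := hσ.OPT_le hk (k * q)
      rw [Nat.mul_div_cancel_left q hk] at this
      exact_mod_cast this
    calc (k : ℝ) * q = lruCost k σ (k * q) := by rw [hσ.lruCost_eq, Nat.cast_mul]
      _ ≤ r * OPT k σ (k * q) + c := h _
      _ ≤ max r 0 * OPT k σ (k * q) + c := by gcongr; exact le_max_left r 0
      _ ≤ max r 0 * (q + (k + 1)) + c := by gcongr
      _ = max r 0 * q + (max r 0 * (k + 1) + c) := by ring
  have hk' : (0 : ℝ) < k := by exact_mod_cast hk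
  exact (le_max_iff.mp (le_of_forall_natCast_mul_le hq)).resolve_right hk'.not_ge

end IsRoundRobin

def layeredCyclic (ℓ k i : ℕ) : ℕ × ℕ := (i % (k + 1) % ℓ, i % (k + 1) / ℓ)

theorem isRoundRobin_layeredCyclic (ℓ k : ℕ) : IsRoundRobin (k + 1) (layeredCyclic ℓ k) := by
  refine fun u v => ⟨fun h => ?_, fun h => ?_⟩
  · obtain ⟨h₁, h₂⟩ := Prod.mk.inj h
    rw [Nat.ModEq, ← Nat.mod_add_div (u % (k + 1)) ℓ, ← Nat.mod_add_div (v % (k + 1)) ℓ, h₁, h₂]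
  · simp only [layeredCyclic, show u % (k + 1) = v % (k + 1) from h]

theorem isLayered_layeredCyclic {n ℓ k : ℕ} (hdvd : ℓ ∣ k + 1) (hpages : k + 1 ≤ n * ℓ) :
    IsLayered n ℓ (layeredCyclic ℓ k) := fun i =>
  ⟨Nat.mod_mod_of_dvd i hdvd,
    Nat.div_lt_of_lt_mul ((Nat.mod_lt i k.succ_pos).trans_le (by rwa [mul_comm]))⟩

theorem lru_competitive_ratio_eq_general
    {n ℓ k : ℕ} (hk : 1 ≤ k) (hdvd : ℓ ∣ k + 1)
    (hpages : k + 1 ≤ n * ℓ) :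
    (∃ c : ℝ, ∀ σ : ℕ → ℕ × ℕ, IsLayered n ℓ σ → ∀ m : ℕ,
        (lruCost k σ m : ℝ) ≤ (k : ℝ) * (OPT k σ m : ℝ) + c) ∧
      ∀ r c : ℝ, (∀ σ : ℕ → ℕ × ℕ, IsLayered n ℓ σ → ∀ m : ℕ,
          (lruCost k σ m : ℝ) ≤ r * (OPT k σ m : ℝ) + c) →
        (k : ℝ) ≤ r :=
  ⟨⟨k, fun σ _ m => by exact_mod_cast lruCost_le_mul_OPT_add hk σ m⟩,
    fun _ _ h => (isRoundRobin_layeredCyclic ℓ k).le_of_lruCost_le_mul_OPT_add hk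
      (h _ (isLayered_layeredCyclic hdvd hpages))⟩

/-- For any `ℓ ≥ 1` and cache size `k ≥ 1` such that `ℓ`
divides `k + 1` (and with enough pages, `n * ℓ ≥ k + 1`), the competitive
ratio of LRU for the `ℓ`-layered paging problem equals exactly `k`: LRU is
`k`-competitive, and whenever LRU is `r`-competitive with additive constant
`c`, necessarily `r ≥ k`. -/
theorem lru_competitive_ratio_eq
    {n ℓ k : ℕ} (hℓ : 1 ≤ ℓ) (hk : 1 ≤ k) (hdvd : ℓ ∣ k + 1)
    (hpages : k + 1 ≤ n * ℓ) :
    (∃ c : ℝ, ∀ σ : ℕ → ℕ × ℕ, IsLayered n ℓ σ → ∀ m : ℕ,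
        (lruCost k σ m : ℝ) ≤ (k : ℝ) * (OPT k σ m : ℝ) + c) ∧
      ∀ r c : ℝ, (∀ σ : ℕ → ℕ × ℕ, IsLayered n ℓ σ → ∀ m : ℕ,
          (lruCost k σ m : ℝ) ≤ r * (OPT k σ m : ℝ) + c) →
        (k : ℝ) ≤ r :=
  lru_competitive_ratio_eq_general hk hdvd hpages
end
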